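/- A helicoidal surface Σ = X(ℝ²) of pitch h > 0 in ℍ²×ℝ is a rotator to mean curvature flow if and only if it is a translator to mean curvature flow with respect to the Killing field ξ = −h∂_t, where ∂_t is the gradient of the height function of ℍ²×ℝ. -/

import Mathlib

open Filter

noncomputable section

/-- `τ = ⟨α, T⟩` for the unit-speed generating plane curve `α = (α₁, α₂)`. -/
def tauF (α₁ α₂ : ℝ → ℝ) (u : ℝ) : ℝ := α₁ u * deriv α₁ u + α₂ u * deriv α₂ u

/-- `μ = ⟨α, N⟩`, `N = JT`. -/
def muF (α₁ α₂ : ℝ → ℝ) (u : ℝ) : ℝ := α₂ u * deriv α₁ u - α₁ u * deriv α₂ u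

/-- curvature `k = ⟨α'', N⟩` of the plane curve `α`. -/
def curvF (α₁ α₂ : ℝ → ℝ) (u : ℝ) : ℝ :=
  deriv (deriv α₁) u * (-(deriv α₂ u)) + deriv (deriv α₂) u * deriv α₁ u

/-- first component of the helicoidal parameterization `X(u,v) = (e^{vJ}α(u), φ(u), hv)`. -/
def X1 (α₁ α₂ : ℝ → ℝ) (u v : ℝ) : ℝ := Real.cos v * α₁ u - Real.sin v * α₂ u

/-- second component of `X`. -/
def X2 (α₁ α₂ : ℝ → ℝ) (u v : ℝ) : ℝ := Real.sin v * α₁ u + Real.cos v * α₂ u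

/-- `E = ⟨X_u, X_u⟩` in the Lorentzian metric `dx₁² + dx₂² − dx₃² + dt²` of `𝕃³×ℝ`. -/
def Ecoef (h : ℝ) (α₁ α₂ φ : ℝ → ℝ) (u v : ℝ) : ℝ :=
  (deriv (fun u => X1 α₁ α₂ u v) u) ^ 2 + (deriv (fun u => X2 α₁ α₂ u v) u) ^ 2
    - (deriv φ u) ^ 2 + (deriv (fun _ : ℝ => h * v) u) ^ 2

/-- `F = ⟨X_u, X_v⟩`. -/
def Fcoef (h : ℝ) (α₁ α₂ φ : ℝ → ℝ) (u v : ℝ) : ℝ :=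
  deriv (fun u => X1 α₁ α₂ u v) u * deriv (fun v => X1 α₁ α₂ u v) v
  + deriv (fun u => X2 α₁ α₂ u v) u * deriv (fun v => X2 α₁ α₂ u v) v
  - deriv φ u * deriv (fun _ : ℝ => φ u) v
  + deriv (fun _ : ℝ => h * v) u * deriv (fun v => h * v) v

/-- `G = ⟨X_v, X_v⟩`. -/
def Gcoef (h : ℝ) (α₁ α₂ φ : ℝ → ℝ) (u v : ℝ) : ℝ :=
  (deriv (fun v => X1 α₁ α₂ u v) v) ^ 2 + (deriv (fun v => X2 α₁ α₂ u v) v) ^ 2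
    - (deriv (fun _ : ℝ => φ u) v) ^ 2 + (deriv (fun v => h * v) v) ^ 2

/-- `a = μ φ'`. -/
def aF (α₁ α₂ φ : ℝ → ℝ) (u : ℝ) : ℝ := muF α₁ α₂ u * deriv φ u

/-- `b = (1 + μ²)/φ`. -/
def bF (α₁ α₂ φ : ℝ → ℝ) (u : ℝ) : ℝ := (1 + (muF α₁ α₂ u) ^ 2) / φ u

/-- `c = −φ'/h`. -/
def cF (h : ℝ) (φ : ℝ → ℝ) (u : ℝ) : ℝ := -(deriv φ u) / h

/-- `ρ = (a² + b² − μ² + c²)^{-1/2}`. -/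
def rhoF (h : ℝ) (α₁ α₂ φ : ℝ → ℝ) (u : ℝ) : ℝ :=
  (Real.sqrt ((aF α₁ α₂ φ u) ^ 2 + (bF α₁ α₂ φ u) ^ 2 - (muF α₁ α₂ u) ^ 2
    + (cF h φ u) ^ 2))⁻¹

/-- first component of the unit normal `η = ρ(e^{vJ}(aT + bN), μ, c)`. -/
def eta1 (h : ℝ) (α₁ α₂ φ : ℝ → ℝ) (u v : ℝ) : ℝ :=
  rhoF h α₁ α₂ φ u *
    (Real.cos v * (aF α₁ α₂ φ u * deriv α₁ u + bF α₁ α₂ φ u * (-(deriv α₂ u)))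
     - Real.sin v * (aF α₁ α₂ φ u * deriv α₂ u + bF α₁ α₂ φ u * deriv α₁ u))

/-- second component of `η`. -/
def eta2 (h : ℝ) (α₁ α₂ φ : ℝ → ℝ) (u v : ℝ) : ℝ :=
  rhoF h α₁ α₂ φ u *
    (Real.sin v * (aF α₁ α₂ φ u * deriv α₁ u + bF α₁ α₂ φ u * (-(deriv α₂ u)))
     + Real.cos v * (aF α₁ α₂ φ u * deriv α₂ u + bF α₁ α₂ φ u * deriv α₁ u))

/-- third component of `η`. -/
def eta3 (h : ℝ) (α₁ α₂ φ : ℝ → ℝ) (u : ℝ) : ℝ := rhoF h α₁ α₂ φ u * muF α₁ α₂ u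

/-- fourth (vertical) component of `η`. -/
def eta4 (h : ℝ) (α₁ α₂ φ : ℝ → ℝ) (u : ℝ) : ℝ := rhoF h α₁ α₂ φ u * cF h φ u

/-- `e = ⟨X_uu, η⟩`. -/
def ecoef (h : ℝ) (α₁ α₂ φ : ℝ → ℝ) (u v : ℝ) : ℝ :=
  deriv (fun u => deriv (fun u => X1 α₁ α₂ u v) u) u * eta1 h α₁ α₂ φ u v
  + deriv (fun u => deriv (fun u => X2 α₁ α₂ u v) u) u * eta2 h α₁ α₂ φ u v
  - deriv (deriv φ) u * eta3 h α₁ α₂ φ u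
  + deriv (fun u => deriv (fun _ : ℝ => h * v) u) u * eta4 h α₁ α₂ φ u

/-- `f = ⟨X_uv, η⟩`. -/
def fcoef (h : ℝ) (α₁ α₂ φ : ℝ → ℝ) (u v : ℝ) : ℝ :=
  deriv (fun v => deriv (fun u => X1 α₁ α₂ u v) u) v * eta1 h α₁ α₂ φ u v
  + deriv (fun v => deriv (fun u => X2 α₁ α₂ u v) u) v * eta2 h α₁ α₂ φ u v
  - deriv (fun _ : ℝ => deriv φ u) v * eta3 h α₁ α₂ φ u
  + deriv (fun v => deriv (fun _ : ℝ => h * v) u) v * eta4 h α₁ α₂ φ u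

/-- `g = ⟨X_vv, η⟩`. -/
def gcoef (h : ℝ) (α₁ α₂ φ : ℝ → ℝ) (u v : ℝ) : ℝ :=
  deriv (fun v => deriv (fun v => X1 α₁ α₂ u v) v) v * eta1 h α₁ α₂ φ u v
  + deriv (fun v => deriv (fun v => X2 α₁ α₂ u v) v) v * eta2 h α₁ α₂ φ u v
  - deriv (fun v => deriv (fun _ : ℝ => φ u) v) v * eta3 h α₁ α₂ φ u
  + deriv (fun v => deriv (fun v => h * v) v) v * eta4 h α₁ α₂ φ u

/-- mean curvature `H = (Eg − 2fF + Ge)/(2(EG − F²))`. -/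
def Hmean (h : ℝ) (α₁ α₂ φ : ℝ → ℝ) (u v : ℝ) : ℝ :=
  (Ecoef h α₁ α₂ φ u v * gcoef h α₁ α₂ φ u v
    - 2 * fcoef h α₁ α₂ φ u v * Fcoef h α₁ α₂ φ u v
    + Gcoef h α₁ α₂ φ u v * ecoef h α₁ α₂ φ u v) /
  (2 * (Ecoef h α₁ α₂ φ u v * Gcoef h α₁ α₂ φ u v - (Fcoef h α₁ α₂ φ u v) ^ 2))

/-- the rotator condition `H = ⟨Jπ(X), η⟩`, with `Jπ(X) = (−X₂, X₁, 0, 0)`. -/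
def IsRotator (h : ℝ) (α₁ α₂ φ : ℝ → ℝ) : Prop :=
  ∀ u v : ℝ, Hmean h α₁ α₂ φ u v =
    -(X2 α₁ α₂ u v) * eta1 h α₁ α₂ φ u v + X1 α₁ α₂ u v * eta2 h α₁ α₂ φ u v

end

/-!
Both Killing fields have the same inner product with `η`, whatever `H` is. Rotating the frame
by `e^{vJ}` gives `⟨Jπ(X), η⟩ = ρ(bτ − aμ)`, and differentiating `φ² = 1 + |α|²` (the curve lies
in the hyperboloid) gives `τ = φφ'`. Hence `bτ − aμ = (1 + μ²)φ' − μ²φ' = φ' = −hc`, which is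
`⟨−h∂_t, η⟩ / ρ`.
-/

theorem tauF_eq_mul_deriv {α₁ α₂ φ : ℝ → ℝ} {u : ℝ} (hα₁ : DifferentiableAt ℝ α₁ u)
    (hα₂ : DifferentiableAt ℝ α₂ u) (hφ : DifferentiableAt ℝ φ u)
    (hhyp : ∀ u : ℝ, (φ u) ^ 2 = 1 + ((α₁ u) ^ 2 + (α₂ u) ^ 2)) :
    tauF α₁ α₂ u = φ u * deriv φ u := by
  have hderiv := congrArg (fun f => deriv f u) (funext hhyp)
  rw [deriv_fun_pow hφ, deriv_const_add, deriv_fun_add (hα₁.fun_pow 2) (hα₂.fun_pow 2),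
    deriv_fun_pow hα₁, deriv_fun_pow hα₂] at hderiv
  norm_num at hderiv
  unfold tauF
  linarith

theorem rotator_inner_eta (h : ℝ) (α₁ α₂ φ : ℝ → ℝ) (u v : ℝ) :
    -(X2 α₁ α₂ u v) * eta1 h α₁ α₂ φ u v + X1 α₁ α₂ u v * eta2 h α₁ α₂ φ u v
      = rhoF h α₁ α₂ φ u * (bF α₁ α₂ φ u * tauF α₁ α₂ u - aF α₁ α₂ φ u * muF α₁ α₂ u) := by
  unfold eta1 eta2 X1 X2 muF tauF
  linear_combination (rhoF h α₁ α₂ φ u *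
    (α₁ u * (aF α₁ α₂ φ u * deriv α₂ u + bF α₁ α₂ φ u * deriv α₁ u)
      - α₂ u * (aF α₁ α₂ φ u * deriv α₁ u - bF α₁ α₂ φ u * deriv α₂ u))) *
    Real.sin_sq_add_cos_sq v

theorem bF_mul_tauF_sub_aF_mul_muF {α₁ α₂ φ : ℝ → ℝ} {u : ℝ} (hφu : φ u ≠ 0)
    (hτ : tauF α₁ α₂ u = φ u * deriv φ u) :
    bF α₁ α₂ φ u * tauF α₁ α₂ u - aF α₁ α₂ φ u * muF α₁ α₂ u = deriv φ u := by
  unfold aF bF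
  rw [hτ]
  field_simp
  ring

theorem neg_mul_eta4 {h : ℝ} (hh : h ≠ 0) (α₁ α₂ φ : ℝ → ℝ) (u : ℝ) :
    -h * eta4 h α₁ α₂ φ u = rhoF h α₁ α₂ φ u * deriv φ u := by
  unfold eta4 cF
  field_simp

theorem rotator_inner_eta_eq_translator_inner_eta {h : ℝ} (hh : h ≠ 0) {α₁ α₂ φ : ℝ → ℝ}
    (hα₁ : Differentiable ℝ α₁) (hα₂ : Differentiable ℝ α₂) (hφ : Differentiable ℝ φ)
    (hhyp : ∀ u : ℝ, (φ u) ^ 2 = 1 + ((α₁ u) ^ 2 + (α₂ u) ^ 2)) (u v : ℝ) :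
    -(X2 α₁ α₂ u v) * eta1 h α₁ α₂ φ u v + X1 α₁ α₂ u v * eta2 h α₁ α₂ φ u v
      = -h * eta4 h α₁ α₂ φ u := by
  have hφu : φ u ≠ 0 := fun h0 => by
    nlinarith [hhyp u, sq_nonneg (α₁ u), sq_nonneg (α₂ u)]
  rw [rotator_inner_eta, neg_mul_eta4 hh, bF_mul_tauF_sub_aF_mul_muF hφu
    (tauF_eq_mul_deriv (hα₁ u) (hα₂ u) (hφ u) hhyp)]

theorem rotator_iff_translator_general (h : ℝ) (hh : 0 < h) (α₁ α₂ φ : ℝ → ℝ)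
    (hα₁ : ContDiff ℝ 2 α₁) (hα₂ : ContDiff ℝ 2 α₂) (hφ : ContDiff ℝ 2 φ)
    (hhyp : ∀ u : ℝ, (φ u) ^ 2 = 1 + ((α₁ u) ^ 2 + (α₂ u) ^ 2)) :
    IsRotator h α₁ α₂ φ ↔
      ∀ u v : ℝ, Hmean h α₁ α₂ φ u v = -h * eta4 h α₁ α₂ φ u := by
  have hinner := rotator_inner_eta_eq_translator_inner_eta hh.ne'
    (hα₁.differentiable two_ne_zero) (hα₂.differentiable two_ne_zero)
    (hφ.differentiable two_ne_zero) hhyp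
  simp only [IsRotator, hinner]

/-- a helicoidal surface of pitch `h > 0` in `ℍ²×ℝ` is a rotator to MCF
if and only if it is a translator with respect to the Killing field `ξ = −h∂_t`,
i.e. `H = ⟨−h∂_t, η⟩ = −h·η₄`. -/
theorem rotator_iff_translator (h : ℝ) (hh : 0 < h) (α₁ α₂ φ : ℝ → ℝ)
    (hα₁ : ContDiff ℝ 2 α₁) (hα₂ : ContDiff ℝ 2 α₂) (hφ : ContDiff ℝ 2 φ)
    (hunit : ∀ u : ℝ, (deriv α₁ u) ^ 2 + (deriv α₂ u) ^ 2 = 1)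
    (hhyp : ∀ u : ℝ, (φ u) ^ 2 = 1 + ((α₁ u) ^ 2 + (α₂ u) ^ 2))
    (hpos : ∀ u : ℝ, 0 < φ u) :
    IsRotator h α₁ α₂ φ ↔
      ∀ u v : ℝ, Hmean h α₁ α₂ φ u v = -h * eta4 h α₁ α₂ φ u :=
  rotator_iff_translator_general h hh α₁ α₂ φ hα₁ hα₂ hφ hhyp
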